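/- arXiv:math/0412074 — 4 statements merged into one kernel-verified Lean document; each statement's English description precedes it below -/
import Mathlib

section
/- Let α be a finite type and n an integer, and let f : Finset α → ℤ satisfy: (i) f ∅ = n; (ii) for every finite set T : Finset α and every x ∉ T, |f (insert x T) − f T| ≤ 1; (iii) f {x} = n − 1 for every x : α. Then for every nonempty T : Finset α one has f T ≤ n + T.card − 2. -/
/-- Claim 2 (with Claim 1) in the proof of Theorem 2: if `f ∅ = n`, a single
insertion changes `f` by at most `1`, and `f {x} = n - 1` for every `x`, then
`f T ≤ n + T.card - 2` for every nonempty `T`. -/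
theorem stmt_0 {α : Type*} [Fintype α] [DecidableEq α] (n : ℤ) (f : Finset α → ℤ)
    (h_empty : f ∅ = n)
    (h_step : ∀ (T : Finset α) (x : α), x ∉ T → |f (insert x T) - f T| ≤ 1)
    (h_single : ∀ x : α, f {x} = n - 1) :
    ∀ T : Finset α, T.Nonempty → f T ≤ n + T.card - 2 := by
  intro T
  induction T using Finset.induction_on with
  | empty => intro h; exact absurd h (by simp)
  | @insert x s hx ih =>
    intro _
    rcases s.eq_empty_or_nonempty with rfl | hs
    · simp [h_single x]; omega
    · have h1 := h_step s x hx
      have h2 : f (insert x s) ≤ f s + 1 := by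
        have := abs_le.mp h1
        linarith [this.2]
      have h3 := ih hs
      have hcard : (insert x s).card = s.card + 1 := Finset.card_insert_of_notMem hx
      rw [hcard]
      push_cast
      linarith
end

section
/- Let α be a finite type and n an integer, and let f : Finset α → ℤ satisfy: (i) f ∅ = n; (ii) for every finite set T : Finset α and every x ∉ T, |f (insert x T) − f T| ≤ 1; (iii) n − 1 ≤ f {x} ≤ n for every x : α. Then for every nonempty T : Finset α one has f T ≤ n + T.card − 1. -/
/-- Claim 5 in the proof of Theorem 3: if `f ∅ = n`, a single insertion changes
`f` by at most `1`, and `n - 1 ≤ f {x} ≤ n` for every `x`, then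
`f T ≤ n + T.card - 1` for every nonempty `T`. -/
theorem stmt_1 {α : Type*} [Fintype α] [DecidableEq α] (n : ℤ) (f : Finset α → ℤ)
    (h_empty : f ∅ = n)
    (h_step : ∀ (T : Finset α) (x : α), x ∉ T → |f (insert x T) - f T| ≤ 1)
    (h_single : ∀ x : α, n - 1 ≤ f {x} ∧ f {x} ≤ n) :
    ∀ T : Finset α, T.Nonempty → f T ≤ n + T.card - 1 := by
  intro T
  induction T using Finset.induction_on with
  | empty => intro h; exact absurd rfl h.ne_empty
  | @insert x T hx ih =>
    intro _
    rcases T.eq_empty_or_nonempty with rfl | hT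
    · simpa using (h_single x).2
    · have h1 := ih hT
      have h2 := (abs_le.mp (h_step T x hx)).2
      rw [Finset.card_insert_of_notMem hx]
      push_cast
      omega
end

section
/- Let α be a finite type with c = Fintype.card α, let a, b be natural numbers, and let f : Finset α → ℕ satisfy: (i) 1 ≤ f T for every T; (ii) f ∅ = a and f Finset.univ = b; (iii) f {x} = a − 1 for every x : α; (iv) f (Finset.univ.erase x) = b − 1 for every x : α; (v) for every T : Finset α and every x ∉ T, |(f (insert x T) : ℤ) − (f T : ℤ)| ≤ 1. Define the Laurent polynomial P = ∑_{T : Finset α} T^(c − 2·T.card) * (−T^2 − T^(−2))^(f T − 1) in ℤ[T;T⁻¹] (exponent c − 2·T.card taken in ℤ). Then P ≠ 0, the maximum of the support of P equals c + 2·a − 2, and the minimum of the support of P equals −c − 2·b + 2; in particular the span of P equals 2·c + 2·(a + b) − 4. -/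
open LaurentPolynomial

private lemma qpow_eq (n : ℕ) :
    ((-T 2 - T (-2) : ℤ[T;T⁻¹])) ^ n
      = ∑ k ∈ Finset.range (n+1),
          (((-1)^n * n.choose k : ℤ)) • (T (4*k - 2*n) : ℤ[T;T⁻¹]) := by
  have h1 : (-T 2 - T (-2) : ℤ[T;T⁻¹]) = (-1) * (T 2 + T (-2)) := by ring
  rw [h1, mul_pow, add_pow, Finset.mul_sum]
  refine Finset.sum_congr rfl fun k hk => ?_
  rw [Finset.mem_range] at hk
  have hk' : k ≤ n := Nat.lt_succ_iff.mp hk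
  rw [T_pow, T_pow, ← T_add]
  have he : (k:ℤ) * 2 + ((n-k:ℕ):ℤ) * (-2) = 4*k - 2*n := by
    push_cast [hk']; ring
  rw [he, zsmul_eq_mul]
  push_cast
  ring

private lemma qpow_apply (n : ℕ) (d : ℤ) :
    ((-T 2 - T (-2) : ℤ[T;T⁻¹]) ^ n).coeff d
      = ∑ k ∈ Finset.range (n+1),
          if (4*(k:ℤ) - 2*n : ℤ) = d then ((-1)^n * n.choose k : ℤ) else 0 := by
  rw [qpow_eq, AddMonoidAlgebra.coeff_sum, Finsupp.finset_sum_apply]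
  refine Finset.sum_congr rfl fun k _ => ?_
  rw [AddMonoidAlgebra.coeff_smul_apply, T_apply]
  split_ifs <;> simp

private lemma qpow_top (n : ℕ) :
    ((-T 2 - T (-2) : ℤ[T;T⁻¹]) ^ n).coeff (2*n) = (-1)^n := by
  rw [qpow_apply, Finset.sum_eq_single n]
  · rw [if_pos (by ring), Nat.choose_self]; simp
  · intro k hk hkn
    rw [Finset.mem_range] at hk
    rw [if_neg (by omega)]
  · intro h; exact absurd (Finset.self_mem_range_succ n) h

private lemma qpow_bot (n : ℕ) :
    ((-T 2 - T (-2) : ℤ[T;T⁻¹]) ^ n).coeff (-(2*n)) = (-1)^n := by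
  rw [qpow_apply, Finset.sum_eq_single 0]
  · rw [if_pos (by push_cast; ring), Nat.choose_zero_right]; simp
  · intro k hk hkn
    rw [Finset.mem_range] at hk
    rw [if_neg (by omega)]
  · intro h; exact absurd (Finset.mem_range.mpr (Nat.succ_pos n)) h

private lemma qpow_zero_of (n : ℕ) (d : ℤ) (hd : d < -(2*n) ∨ (2*n:ℤ) < d) :
    ((-T 2 - T (-2) : ℤ[T;T⁻¹]) ^ n).coeff d = 0 := by
  rw [qpow_apply]
  refine Finset.sum_eq_zero fun k hk => ?_
  rw [Finset.mem_range] at hk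
  rw [if_neg (by omega)]

private lemma shift_apply (e : ℤ) (p : ℤ[T;T⁻¹]) (d : ℤ) :
    ((T e : ℤ[T;T⁻¹]) * p).coeff d = p.coeff (d - e) := by
  have h : (T e : ℤ[T;T⁻¹]) = AddMonoidAlgebra.single e 1 := rfl
  rw [h, AddMonoidAlgebra.coeff_single_mul_apply, one_mul, neg_add_eq_sub]

/-- Combinatorial core of the proof of Theorem 2: the Kauffman bracket
`P = ∑_T T^(c - 2*|T|) * (-T^2 - T^(-2))^(f T - 1)` of a proper alternating
virtual link diagram is nonzero, its maximal degree is `c + 2a - 2`, its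
minimal degree is `-c - 2b + 2`, and its span is `2c + 2(a+b) - 4`. -/
theorem stmt_3 {α : Type*} [Fintype α] [DecidableEq α] (c a b : ℕ)
    (hc : c = Fintype.card α) (f : Finset α → ℕ)
    (h_pos : ∀ T : Finset α, 1 ≤ f T)
    (h_empty : f ∅ = a) (h_univ : f Finset.univ = b)
    (h_single : ∀ x : α, f {x} = a - 1)
    (h_cosingle : ∀ x : α, f (Finset.univ.erase x) = b - 1)
    (h_step : ∀ (T : Finset α) (x : α), x ∉ T →
      |(f (insert x T) : ℤ) - (f T : ℤ)| ≤ 1)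
    (P : LaurentPolynomial ℤ)
    (hP : P = ∑ T : Finset α,
      LaurentPolynomial.T ((c : ℤ) - 2 * (T.card : ℤ)) *
        (-LaurentPolynomial.T 2 - LaurentPolynomial.T (-2)) ^ (f T - 1)) :
    P ≠ 0 ∧
    P.coeff.support.max = (((c : ℤ) + 2 * (a : ℤ) - 2 : ℤ) : WithBot ℤ) ∧
    P.coeff.support.min = ((-(c : ℤ) - 2 * (b : ℤ) + 2 : ℤ) : WithTop ℤ) ∧
    ∀ hne : P.coeff.support.Nonempty,
      P.coeff.support.max' hne - P.coeff.support.min' hne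
        = 2 * (c : ℤ) + 2 * ((a : ℤ) + (b : ℤ)) - 4 := by
  have hfa1 : 1 ≤ a := h_empty ▸ h_pos ∅
  have hfb1 : 1 ≤ b := h_univ ▸ h_pos Finset.univ
  -- step lemma
  have key : ∀ (U S : Finset α), Disjoint S U →
      ((f (S ∪ U) : ℤ) ≤ f S + U.card ∧ (f S : ℤ) ≤ f (S ∪ U) + U.card) := by
    intro U
    induction U using Finset.induction_on with
    | empty => intro S _; simp
    | @insert x U hx ih =>
      intro S hdisj
      obtain ⟨hxS, hdU⟩ := Finset.disjoint_insert_right.mp hdisj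
      have hxSU : x ∉ S ∪ U := by simp [hxS, hx]
      have h1 := ih S hdU
      have h2 := abs_le.mp (h_step (S ∪ U) x hxSU)
      rw [Finset.union_insert, Finset.card_insert_of_notMem hx]
      push_cast
      omega
  have L1 : ∀ T : Finset α, T.Nonempty → (f T : ℤ) ≤ (a:ℤ) + T.card - 2 := by
    rintro T ⟨x, hx⟩
    have hsub : {x} ⊆ T := Finset.singleton_subset_iff.mpr hx
    have hk := (key (T \ {x}) {x} Finset.disjoint_sdiff).1
    rw [Finset.union_sdiff_of_subset hsub] at hk
    have hcard : (T \ {x}).card = T.card - 1 := by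
      rw [Finset.card_sdiff_of_subset hsub, Finset.card_singleton]
    have hfx := h_single x
    have hpx := h_pos {x}
    have hTpos : 1 ≤ T.card := Finset.card_pos.mpr ⟨x, hx⟩
    omega
  have L2 : ∀ T : Finset α, T ≠ Finset.univ →
      (f T : ℤ) ≤ (b:ℤ) + ((c:ℤ) - T.card) - 2 := by
    intro T hT
    obtain ⟨x, hx⟩ : ∃ x, x ∉ T := by
      by_contra h; push_neg at h; exact hT (Finset.eq_univ_iff_forall.mpr h)
    have hsub : T ⊆ Finset.univ.erase x := fun y hy =>
      Finset.mem_erase.mpr ⟨fun h => hx (h ▸ hy), Finset.mem_univ y⟩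
    have hk := (key ((Finset.univ.erase x) \ T) T Finset.disjoint_sdiff).2
    rw [Finset.union_sdiff_of_subset hsub] at hk
    have hce : (Finset.univ.erase x).card = c - 1 := by
      rw [Finset.card_erase_of_mem (Finset.mem_univ x), Finset.card_univ, ← hc]
    have hcard : ((Finset.univ.erase x) \ T).card = (c - 1) - T.card := by
      rw [Finset.card_sdiff_of_subset hsub, hce]
    have hfe := h_cosingle x
    have hpe := h_pos (Finset.univ.erase x)
    have hTc : T.card ≤ c - 1 := hce ▸ Finset.card_le_card hsub
    have hc1 : 1 ≤ c := by
      rw [hc]; exact Fintype.card_pos_iff.mpr ⟨x⟩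
    omega
  have hPapp : ∀ d : ℤ, P.coeff d = ∑ T : Finset α,
      ((-LaurentPolynomial.T 2 - LaurentPolynomial.T (-2) : ℤ[T;T⁻¹]) ^ (f T - 1)).coeff
        (d - ((c:ℤ) - 2*(T.card:ℤ))) := by
    intro d
    rw [hP, AddMonoidAlgebra.coeff_sum, Finsupp.finset_sum_apply]
    exact Finset.sum_congr rfl fun T _ => shift_apply _ _ _
  -- coefficient at the top degree
  have hPD : P.coeff ((c:ℤ) + 2*a - 2) = (-1)^(a-1) := by
    rw [hPapp, Finset.sum_eq_single ∅]
    · have e1 : ((c:ℤ) + 2*a - 2) - ((c:ℤ) - 2*(((∅:Finset α).card:ℕ):ℤ))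
          = 2*((a-1:ℕ):ℤ) := by
        simp only [Finset.card_empty, Nat.cast_zero]
        omega
      rw [h_empty, e1, qpow_top]
    · intro T _ hT
      apply qpow_zero_of
      right
      have hL := L1 T (Finset.nonempty_iff_ne_empty.mpr hT)
      have hp := h_pos T
      omega
    · intro h; exact absurd (Finset.mem_univ ∅) h
  -- coefficient at the bottom degree
  have hPm : P.coeff (-(c:ℤ) - 2*b + 2) = (-1)^(b-1) := by
    rw [hPapp, Finset.sum_eq_single Finset.univ]
    · have hcu : ((Finset.univ : Finset α).card : ℤ) = (c:ℤ) := by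
        rw [Finset.card_univ, ← hc]
      have e1 : (-(c:ℤ) - 2*b + 2) - ((c:ℤ) - 2*((Finset.univ : Finset α).card:ℤ))
          = -(2*((b-1:ℕ):ℤ)) := by
        rw [hcu]; omega
      rw [h_univ, e1, qpow_bot]
    · intro T _ hT
      apply qpow_zero_of
      left
      have hL := L2 T hT
      have hp := h_pos T
      omega
    · intro h; exact absurd (Finset.mem_univ _) h
  -- support bounds
  have hsupp : ∀ d ∈ P.coeff.support, -(c:ℤ) - 2*b + 2 ≤ d ∧ d ≤ (c:ℤ) + 2*a - 2 := by
    intro d hd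
    rw [Finsupp.mem_support_iff, hPapp] at hd
    obtain ⟨T, -, hT⟩ := Finset.exists_ne_zero_of_sum_ne_zero hd
    have hin : ¬(d - ((c:ℤ) - 2*(T.card:ℤ)) < -(2*((f T - 1:ℕ):ℤ)) ∨
        (2*((f T - 1:ℕ):ℤ)) < d - ((c:ℤ) - 2*(T.card:ℤ))) :=
      fun h => hT (qpow_zero_of _ _ h)
    push_neg at hin
    have hp := h_pos T
    constructor
    · rcases eq_or_ne T Finset.univ with rfl | hTu
      · have hcu : ((Finset.univ : Finset α).card : ℤ) = (c:ℤ) := by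
          rw [Finset.card_univ, ← hc]
        rw [h_univ] at hin
        rw [h_univ] at hp
        omega
      · have hL := L2 T hTu
        omega
    · rcases eq_or_ne T ∅ with rfl | hTe
      · have hce : (((∅ : Finset α).card : ℕ) : ℤ) = 0 := by
          simp
        rw [h_empty] at hin
        rw [h_empty] at hp
        omega
      · have hL := L1 T (Finset.nonempty_iff_ne_empty.mpr hTe)
        omega
  have hDmem : ((c:ℤ) + 2*a - 2) ∈ P.coeff.support := by
    rw [Finsupp.mem_support_iff, hPD]
    exact pow_ne_zero _ (by norm_num)
  have hmmem : (-(c:ℤ) - 2*b + 2) ∈ P.coeff.support := by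
    rw [Finsupp.mem_support_iff, hPm]
    exact pow_ne_zero _ (by norm_num)
  have hmax : P.coeff.support.max = (((c : ℤ) + 2 * (a : ℤ) - 2 : ℤ) : WithBot ℤ) := by
    apply le_antisymm
    · exact Finset.max_le fun x hx => by exact_mod_cast (hsupp x hx).2
    · exact Finset.le_max hDmem
  have hmin : P.coeff.support.min = ((-(c : ℤ) - 2 * (b : ℤ) + 2 : ℤ) : WithTop ℤ) := by
    apply le_antisymm
    · exact Finset.min_le hmmem
    · exact Finset.le_min fun x hx => by exact_mod_cast (hsupp x hx).1
  refine ⟨?_, hmax, hmin, ?_⟩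
  · intro h
    rw [h] at hPD
    have : ((0 : ℤ[T;T⁻¹]).coeff ((c:ℤ) + 2*a - 2)) = 0 := rfl
    rw [this] at hPD
    exact pow_ne_zero _ (by norm_num : (-1:ℤ) ≠ 0) hPD.symm
  · intro hne
    have h1 : (P.coeff.support.max' hne : WithBot ℤ) = (((c:ℤ) + 2*a - 2 : ℤ) : WithBot ℤ) := by
      rw [Finset.coe_max']; exact hmax
    have h2 : (P.coeff.support.min' hne : WithTop ℤ) = ((-(c:ℤ) - 2*b + 2 : ℤ) : WithTop ℤ) := by
      rw [Finset.coe_min']; exact hmin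
    have h1' : P.coeff.support.max' hne = (c:ℤ) + 2*a - 2 := by exact_mod_cast h1
    have h2' : P.coeff.support.min' hne = -(c:ℤ) - 2*b + 2 := by exact_mod_cast h2
    rw [h1', h2']
    ring
end

section
/- Let α be a finite type with c = Fintype.card α, let a, b be natural numbers, and let f : Finset α → ℕ satisfy: (i) 1 ≤ f T for every T; (ii) f ∅ = a and f Finset.univ = b; (iii) a − 1 ≤ f {x} ≤ a for every x : α; (iv) b − 1 ≤ f (Finset.univ.erase x) ≤ b for every x : α; (v) for every T : Finset α and every x ∉ T, |(f (insert x T) : ℤ) − (f T : ℤ)| ≤ 1. Define the Laurent polynomial P = ∑_{T : Finset α} T^(c − 2·T.card) * (−T^2 − T^(−2))^(f T − 1) in ℤ[T;T⁻¹] (exponent c − 2·T.card taken in ℤ). Then P ≠ 0, the maximum of the support of P equals c + 2·a − 2, and the minimum of the support of P equals −c − 2·b + 2; in particular the span of P equals 2·c + 2·(a + b) − 4. -/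
open LaurentPolynomial Finset

lemma Qpow_eq (n : ℕ) :
    ((-T 2 - T (-2) : LaurentPolynomial ℤ)) ^ n
      = ∑ k ∈ Finset.range (n+1),
          C ((-1:ℤ)^n * n.choose k) * T (4*(k:ℤ) - 2*n) := by
  have h1 : (-T 2 - T (-2) : LaurentPolynomial ℤ) = C (-1) * (T 2 + T (-2)) := by
    simp [mul_add]; ring
  rw [h1, mul_pow, ← map_pow, add_pow]
  rw [Finset.mul_sum]
  refine Finset.sum_congr rfl fun k hk => ?_
  have hk' : k ≤ n := by simpa using Nat.lt_succ_iff.mp (Finset.mem_range.mp hk)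
  have hcast : ((n - k : ℕ) : ℤ) = (n : ℤ) - k := by
    exact_mod_cast Int.ofNat_sub hk'
  have hch : ((n.choose k : ℕ) : LaurentPolynomial ℤ) = C ((n.choose k : ℤ)) := by
    simp [map_natCast]
  rw [T_pow, T_pow, ← T_add, hch]
  have hexp : (k : ℤ) * 2 + ((n-k : ℕ) : ℤ) * (-2) = 4*(k:ℤ) - 2*n := by
    rw [hcast]; ring
  rw [hexp, map_mul]
  ring

lemma term_apply (m : ℤ) (n : ℕ) (e : ℤ) :
    ((T m * (-T 2 - T (-2)) ^ n : LaurentPolynomial ℤ)).coeff e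
      = ∑ k ∈ Finset.range (n+1),
          if m + (4*(k:ℤ) - 2*n) = e then ((-1:ℤ)^n * n.choose k) else 0 := by
  rw [Qpow_eq, Finset.mul_sum]
  have h1 : ∀ k : ℕ, (T m * (C ((-1:ℤ)^n * n.choose k) * T (4*(k:ℤ) - 2*n)) : LaurentPolynomial ℤ)
      = C ((-1:ℤ)^n * n.choose k) * T (m + (4*(k:ℤ) - 2*n)) := by
    intro k
    rw [mul_comm, mul_T_assoc, add_comm]
  simp_rw [h1]
  rw [AddMonoidAlgebra.coeff_sum, Finsupp.finset_sum_apply]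
  refine Finset.sum_congr rfl fun k _ => ?_
  rw [← single_eq_C_mul_T]
  exact Finsupp.single_apply

lemma term_high (m e : ℤ) (n : ℕ) (h : m + 2*n < e) :
    ((T m * (-T 2 - T (-2)) ^ n : LaurentPolynomial ℤ)).coeff e = 0 := by
  rw [term_apply]
  refine Finset.sum_eq_zero fun k hk => ?_
  have hk' : (k:ℤ) ≤ n := by exact_mod_cast Nat.lt_succ_iff.mp (Finset.mem_range.mp hk)
  rw [if_neg]; omega

lemma term_low (m e : ℤ) (n : ℕ) (h : e < m - 2*n) :
    ((T m * (-T 2 - T (-2)) ^ n : LaurentPolynomial ℤ)).coeff e = 0 := by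
  rw [term_apply]
  refine Finset.sum_eq_zero fun k hk => ?_
  rw [if_neg]
  have : (0:ℤ) ≤ k := Int.natCast_nonneg k
  omega

lemma term_top (m : ℤ) (n : ℕ) :
    ((T m * (-T 2 - T (-2)) ^ n : LaurentPolynomial ℤ)).coeff (m + 2*n) = (-1:ℤ)^n := by
  rw [term_apply]
  rw [Finset.sum_eq_single_of_mem n (Finset.self_mem_range_succ n)]
  · rw [if_pos (by ring), Nat.choose_self]; simp
  · intro k hk hkn
    rw [if_neg]
    have : (k:ℤ) ≠ n := by exact_mod_cast hkn
    omega

lemma term_bot (m : ℤ) (n : ℕ) :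
    ((T m * (-T 2 - T (-2)) ^ n : LaurentPolynomial ℤ)).coeff (m - 2*n) = (-1:ℤ)^n := by
  rw [term_apply]
  rw [Finset.sum_eq_single_of_mem 0 (Finset.mem_range.mpr n.succ_pos)]
  · rw [if_pos (by push_cast; ring), Nat.choose_zero_right]; simp
  · intro k hk hkn
    rw [if_neg]
    have h1 : (k:ℤ) ≠ 0 := by exact_mod_cast hkn
    have : (0:ℤ) ≤ k := Int.natCast_nonneg k
    omega


/-- Combinatorial core of the proof of Theorem 3: the Kauffman bracket
`P = ∑_T T^(c - 2*|T|) * (-T^2 - T^(-2))^(f T - 1)` of a v-alternating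
virtual link diagram is nonzero, its maximal degree is `c + 2a - 2`, its
minimal degree is `-c - 2b + 2`, and its span is `2c + 2(a+b) - 4`. -/
theorem stmt_4 {α : Type*} [Fintype α] [DecidableEq α] (c a b : ℕ)
    (hc : c = Fintype.card α) (f : Finset α → ℕ)
    (h_pos : ∀ T : Finset α, 1 ≤ f T)
    (h_empty : f ∅ = a) (h_univ : f Finset.univ = b)
    (h_single : ∀ x : α, a - 1 ≤ f {x} ∧ f {x} ≤ a)
    (h_cosingle : ∀ x : α, b - 1 ≤ f (Finset.univ.erase x) ∧ f (Finset.univ.erase x) ≤ b)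
    (h_step : ∀ (T : Finset α) (x : α), x ∉ T →
      |(f (insert x T) : ℤ) - (f T : ℤ)| ≤ 1)
    (P : LaurentPolynomial ℤ)
    (hP : P = ∑ T : Finset α,
      LaurentPolynomial.T ((c : ℤ) - 2 * (T.card : ℤ)) *
        (-LaurentPolynomial.T 2 - LaurentPolynomial.T (-2)) ^ (f T - 1)) :
    P ≠ 0 ∧
    P.coeff.support.max = (((c : ℤ) + 2 * (a : ℤ) - 2 : ℤ) : WithBot ℤ) ∧
    P.coeff.support.min = ((-(c : ℤ) - 2 * (b : ℤ) + 2 : ℤ) : WithTop ℤ) ∧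
    ∀ hne : P.coeff.support.Nonempty,
      P.coeff.support.max' hne - P.coeff.support.min' hne
        = 2 * (c : ℤ) + 2 * ((a : ℤ) + (b : ℤ)) - 4 := by
  have ha : 1 ≤ a := h_empty ▸ h_pos ∅
  have hb : 1 ≤ b := h_univ ▸ h_pos Finset.univ
  set etop : ℤ := (c : ℤ) + 2 * a - 2 with hetop
  set ebot : ℤ := -(c : ℤ) - 2 * b + 2 with hebot
  -- step inequality
  have hstep' : ∀ (T : Finset α) (x : α), x ∉ T →
      (f (insert x T) : ℤ) ≤ f T + 1 := by
    intro T x hx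
    have := abs_le.mp (h_step T x hx)
    omega
  -- key combinatorial bound (top)
  have key_top : ∀ T : Finset α, T.Nonempty → (f T : ℤ) ≤ a + T.card - 1 := by
    intro T hT
    induction hT using Finset.Nonempty.cons_induction with
    | singleton x => have := (h_single x).2; simp; omega
    | cons x S hx hS ih =>
        rw [Finset.cons_eq_insert]
        have h1 := hstep' S x hx
        rw [Finset.card_insert_of_notMem hx]
        push_cast
        omega
  -- key combinatorial bound (bottom)
  have key_bot : ∀ S : Finset α, S.Nonempty →
      (f (Finset.univ \ S) : ℤ) ≤ b + S.card - 1 := by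
    intro S hS
    induction hS using Finset.Nonempty.cons_induction with
    | singleton x =>
        rw [Finset.sdiff_singleton_eq_erase]
        have := (h_cosingle x).2; simp; omega
    | cons x S hx hS ih =>
        rw [Finset.cons_eq_insert, Finset.sdiff_insert]
        have hxin : x ∈ Finset.univ \ S := by simp [hx]
        have h1 := hstep' ((Finset.univ \ S).erase x) x (Finset.notMem_erase _ _)
        rw [Finset.insert_erase hxin] at h1
        have habs := abs_le.mp (h_step ((Finset.univ \ S).erase x) x (Finset.notMem_erase _ _))
        rw [Finset.insert_erase hxin] at habs
        rw [Finset.card_insert_of_notMem hx]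
        push_cast
        omega
  have hcard : ∀ T : Finset α, T.card ≤ c := by
    intro T; rw [hc]; exact Finset.card_le_univ T
  -- cast of f T - 1
  have hfn : ∀ T : Finset α, ((f T - 1 : ℕ) : ℤ) = (f T : ℤ) - 1 := by
    intro T; have := h_pos T; omega
  -- vanishing above etop
  have htop0 : ∀ e : ℤ, etop < e → P.coeff e = 0 := by
    intro e he
    rw [hP, AddMonoidAlgebra.coeff_sum, Finsupp.finset_sum_apply]
    refine Finset.sum_eq_zero fun T _ => ?_
    apply term_high
    rw [hfn]
    rcases T.eq_empty_or_nonempty with h | h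
    · subst h; simp [h_empty]; omega
    · have h1 := key_top T h
      have h2 := hcard T
      omega
  -- vanishing below ebot
  have hbot0 : ∀ e : ℤ, e < ebot → P.coeff e = 0 := by
    intro e he
    rw [hP, AddMonoidAlgebra.coeff_sum, Finsupp.finset_sum_apply]
    refine Finset.sum_eq_zero fun T _ => ?_
    apply term_low
    rw [hfn]
    by_cases h : T = Finset.univ
    · subst h
      have : (Finset.univ : Finset α).card = c := by rw [hc]; rfl
      rw [h_univ, this]
      omega
    · have hS : (Finset.univ \ T).Nonempty := by
        rw [Finset.sdiff_nonempty]
        exact fun hsub => h (Finset.Subset.antisymm (Finset.subset_univ T) hsub)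
      have h1 := key_bot _ hS
      rw [Finset.sdiff_sdiff_eq_self (Finset.subset_univ T)] at h1
      have h2 : (Finset.univ \ T).card = c - T.card := by
        rw [Finset.card_sdiff_of_subset (Finset.subset_univ T), hc]; rfl
      have h3 := hcard T
      rw [h2] at h1
      push_cast [Int.ofNat_sub h3] at h1
      omega
  -- value at etop
  have htopv : P.coeff etop = (-1 : ℤ) ^ (a - 1) := by
    rw [hP, AddMonoidAlgebra.coeff_sum, Finsupp.finset_sum_apply]
    rw [Finset.sum_eq_single_of_mem ∅ (Finset.mem_univ _)]
    · have h0 : etop = ((c:ℤ) - 2 * ((∅ : Finset α).card : ℤ)) + 2 * ((f ∅ - 1 : ℕ) : ℤ) := by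
        rw [hfn]; simp [h_empty]; omega
      rw [h0, term_top, h_empty]
    · intro T _ hT
      have h := T.eq_empty_or_nonempty.resolve_left hT
      apply term_high
      rw [hfn]
      have h1 := key_top T h
      have h2 := hcard T
      have h3 : 1 ≤ T.card := Finset.Nonempty.card_pos h
      omega
  -- value at ebot
  have hbotv : P.coeff ebot = (-1 : ℤ) ^ (b - 1) := by
    rw [hP, AddMonoidAlgebra.coeff_sum, Finsupp.finset_sum_apply]
    rw [Finset.sum_eq_single_of_mem Finset.univ (Finset.mem_univ _)]
    · have hcu : ((Finset.univ : Finset α).card : ℤ) = c := by rw [hc]; rfl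
      have h0 : ebot = ((c:ℤ) - 2 * ((Finset.univ : Finset α).card : ℤ))
          - 2 * ((f Finset.univ - 1 : ℕ) : ℤ) := by
        rw [hfn, hcu, h_univ]; omega
      rw [h0, term_bot, h_univ]
    · intro T _ hT
      apply term_low
      rw [hfn]
      have hS : (Finset.univ \ T).Nonempty := by
        rw [Finset.sdiff_nonempty]
        exact fun hsub => hT (Finset.Subset.antisymm (Finset.subset_univ T) hsub)
      have h1 := key_bot _ hS
      rw [Finset.sdiff_sdiff_eq_self (Finset.subset_univ T)] at h1
      have h2 : (Finset.univ \ T).card = c - T.card := by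
        rw [Finset.card_sdiff_of_subset (Finset.subset_univ T), hc]; rfl
      have h3 := hcard T
      rw [h2] at h1
      push_cast [Int.ofNat_sub h3] at h1
      omega
  -- support membership
  have hmemtop : etop ∈ P.coeff.support :=
    Finsupp.mem_support_iff.mpr (by rw [htopv]; exact pow_ne_zero _ (by norm_num))
  have hmembot : ebot ∈ P.coeff.support :=
    Finsupp.mem_support_iff.mpr (by rw [hbotv]; exact pow_ne_zero _ (by norm_num))
  have hbdd : ∀ e ∈ P.coeff.support, ebot ≤ e ∧ e ≤ etop := by
    intro e he
    have hne := Finsupp.mem_support_iff.mp he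
    constructor
    · by_contra h; push_neg at h; exact hne (hbot0 e h)
    · by_contra h; push_neg at h; exact hne (htop0 e h)
  have hne : P.coeff.support.Nonempty := ⟨etop, hmemtop⟩
  have hmax' : P.coeff.support.max' hne = etop :=
    le_antisymm (Finset.max'_le _ _ _ fun e he => (hbdd e he).2)
      (Finset.le_max' _ _ hmemtop)
  have hmin' : P.coeff.support.min' hne = ebot :=
    le_antisymm (Finset.min'_le _ _ hmembot)
      (Finset.le_min' _ _ _ fun e he => (hbdd e he).1)
  refine ⟨?_, ?_, ?_, ?_⟩
  · intro h
    rw [h] at hmemtop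
    simp at hmemtop
  · rw [← Finset.coe_max' hne, hmax']
  · rw [← Finset.coe_min' hne, hmin']
  · intro hne'
    have e1 : P.coeff.support.max' hne' = etop := hmax'
    have e2 : P.coeff.support.min' hne' = ebot := hmin'
    rw [e1, e2, hetop, hebot]
    ring
end
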